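/- Let n ≥ 2 be an integer and s ∈ (0,1). There exists a constant C = C(n,s) > 0 such that for every 𝔟 ∈ [0,1], every y, ξ ∈ ℝ^n_+ and every z ≥ 0 with (y,z) ≠ (ξ,0), one has G_s((y,z),ξ) ≤ C · y_n^𝔟 · ξ_n^𝔟 · (|y−ξ|² + z²)^{−(n−2s+2𝔟)/2}. -/

import Mathlib

open MeasureTheory Real Set

/-- The last coordinate `y_n` of a point `y ∈ ℝ^n`. -/
noncomputable def lastCoord {n : ℕ} (y : EuclideanSpace ℝ (Fin n)) : ℝ :=
  if h : 0 < n then y ⟨n - 1, Nat.sub_lt h one_pos⟩ else 0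

/-- The kernel `G_s((y,z),ξ)`. -/
noncomputable def GKer (n : ℕ) (s : ℝ) (y : EuclideanSpace ℝ (Fin n)) (z : ℝ)
    (ξ : EuclideanSpace ℝ (Fin n)) : ℝ :=
  (‖y - ξ‖ ^ 2 + z ^ 2) ^ (-((n : ℝ) - 2 * s) / 2) *
    (1 - (1 + 4 * lastCoord y * lastCoord ξ / (‖y - ξ‖ ^ 2 + z ^ 2)) ^ ((2 * s - (n : ℝ)) / 2))

/-!
With `D = ‖y - ξ‖² + z²`, `α = (n - 2s)/2` and `a = 4 yₙ ξₙ / D` one has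
`G_s = D^{-α} (1 - (1 + a)^{-α})`. The bracket is at most `max 1 α · min 1 a`: for `α ≤ 1` it is
bounded by `1 - (1 + a)⁻¹ = a / (1 + a)`, and for `α ≥ 1` Bernoulli's inequality bounds it by
`α a / (1 + a)`. Finally `min 1 a ≤ a^b` for `b ∈ [0, 1]`, and `a^b ≤ 4 yₙ^b ξₙ^b D^{-b}`.
-/

lemma div_one_add_le_min {a : ℝ} (ha : 0 ≤ a) : a / (1 + a) ≤ min 1 a := by
  apply le_min
  · rw [div_le_one (by linarith)]; linarith
  · rw [div_le_iff₀ (by linarith)]; nlinarith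

lemma one_sub_one_add_rpow_neg_le (α : ℝ) {a : ℝ} (ha : 0 ≤ a) :
    1 - (1 + a) ^ (-α) ≤ max 1 α * min 1 a := by
  have h1a : 0 < 1 + a := by linarith
  have hinv : 1 - (1 + a)⁻¹ = a / (1 + a) := by field_simp; ring
  rcases le_total α 1 with hα | hα
  · calc 1 - (1 + a) ^ (-α) ≤ 1 - (1 + a) ^ (-1 : ℝ) := by
          gcongr 1 - ?_
          exact rpow_le_rpow_of_exponent_le (by linarith) (by linarith)
      _ = a / (1 + a) := by rw [rpow_neg_one, hinv]
      _ ≤ min 1 a := div_one_add_le_min ha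
      _ ≤ max 1 α * min 1 a :=
          le_mul_of_one_le_left (le_min zero_le_one ha) (le_max_left _ _)
  · have hbern : 1 + α * ((1 + a)⁻¹ - 1) ≤ ((1 + a)⁻¹) ^ α := by
      simpa using one_add_mul_self_le_rpow_one_add
        (by linarith [inv_nonneg.2 h1a.le] : -1 ≤ (1 + a)⁻¹ - 1) hα
    calc 1 - (1 + a) ^ (-α) = 1 - ((1 + a)⁻¹) ^ α := by
          rw [rpow_neg h1a.le, inv_rpow h1a.le]
      _ ≤ α * (a / (1 + a)) := by rw [← hinv]; linarith
      _ ≤ α * min 1 a := by gcongr; exact div_one_add_le_min ha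
      _ = max 1 α * min 1 a := by rw [max_eq_right hα]

lemma min_one_le_rpow {a b : ℝ} (ha : 0 ≤ a) (hb : b ∈ Icc (0 : ℝ) 1) : min 1 a ≤ a ^ b := by
  rcases le_total a 1 with ha1 | ha1
  · calc min 1 a ≤ a := min_le_right _ _
      _ = a ^ (1 : ℝ) := (rpow_one a).symm
      _ ≤ a ^ b := rpow_le_rpow_of_exponent_ge' ha ha1 hb.1 hb.2
  · exact (min_le_left _ _).trans (one_le_rpow ha1 hb.1)

lemma rpow_neg_mul_one_sub_one_add_rpow_neg_le (α : ℝ) {D p b : ℝ} (hD : 0 < D) (hp : 0 ≤ p)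
    (hb : b ∈ Icc (0 : ℝ) 1) :
    D ^ (-α) * (1 - (1 + 4 * p / D) ^ (-α)) ≤ 4 * max 1 α * p ^ b * D ^ (-α - b) := by
  have ha : 0 ≤ 4 * p / D := by positivity
  have hpow : (4 * p / D) ^ b ≤ 4 * p ^ b * D ^ (-b) := by
    rw [div_rpow (by positivity) hD.le, mul_rpow (by norm_num) hp, rpow_neg hD.le, div_eq_mul_inv]
    gcongr
    simpa using rpow_le_rpow_of_exponent_le (by norm_num : (1 : ℝ) ≤ 4) hb.2
  calc D ^ (-α) * (1 - (1 + 4 * p / D) ^ (-α))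
      ≤ D ^ (-α) * (max 1 α * (4 * p ^ b * D ^ (-b))) := by
        gcongr
        calc 1 - (1 + 4 * p / D) ^ (-α) ≤ max 1 α * min 1 (4 * p / D) :=
              one_sub_one_add_rpow_neg_le α ha
          _ ≤ max 1 α * (4 * p ^ b * D ^ (-b)) := by
              gcongr
              exact (min_one_le_rpow ha hb).trans hpow
    _ = 4 * max 1 α * p ^ b * D ^ (-α - b) := by
        rw [sub_eq_add_neg, rpow_add hD]; ring

lemma sq_norm_sub_add_sq_pos {E : Type*} [NormedAddCommGroup E] {y ξ : E} {z : ℝ}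
    (h : (y, z) ≠ (ξ, 0)) : 0 < ‖y - ξ‖ ^ 2 + z ^ 2 := by
  rcases eq_or_ne y ξ with rfl | hyξ
  · have hz : z ≠ 0 := fun hz => h (by rw [hz])
    simp only [sub_self, norm_zero]
    positivity
  · have : 0 < ‖y - ξ‖ := norm_pos_iff.2 (sub_ne_zero.2 hyξ)
    positivity

theorem stmt2_general (n : ℕ) (s : ℝ) :
    ∃ C > (0 : ℝ), ∀ b ∈ Set.Icc (0 : ℝ) 1, ∀ y ξ : EuclideanSpace ℝ (Fin n),
      0 < lastCoord y → 0 < lastCoord ξ → ∀ z : ℝ, 0 ≤ z → (y, z) ≠ (ξ, 0) →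
        GKer n s y z ξ ≤
          C * lastCoord y ^ b * lastCoord ξ ^ b *
            (‖y - ξ‖ ^ 2 + z ^ 2) ^ (-((n : ℝ) - 2 * s + 2 * b) / 2) := by
  set α : ℝ := ((n : ℝ) - 2 * s) / 2
  refine ⟨4 * max 1 α, by positivity, fun b hb y ξ hy hξ z _ hne => ?_⟩
  have key := rpow_neg_mul_one_sub_one_add_rpow_neg_le α (sq_norm_sub_add_sq_pos hne)
    (mul_nonneg hy.le hξ.le) hb
  rw [mul_rpow hy.le hξ.le, ← mul_assoc, ← mul_assoc] at key
  convert key using 2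
  · unfold GKer
    rw [mul_assoc 4]
    congr 3 <;> ring
  · congr 1; ring

theorem stmt2 (n : ℕ) (hn : 2 ≤ n) (s : ℝ) (hs0 : 0 < s) (hs1 : s < 1) :
    ∃ C > (0 : ℝ), ∀ b ∈ Set.Icc (0 : ℝ) 1, ∀ y ξ : EuclideanSpace ℝ (Fin n),
      0 < lastCoord y → 0 < lastCoord ξ → ∀ z : ℝ, 0 ≤ z → (y, z) ≠ (ξ, 0) →
        GKer n s y z ξ ≤
          C * lastCoord y ^ b * lastCoord ξ ^ b *
            (‖y - ξ‖ ^ 2 + z ^ 2) ^ (-((n : ℝ) - 2 * s + 2 * b) / 2) :=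
  stmt2_general n s
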